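/- arXiv:1003.1000 — 3 statements merged into one kernel-verified Lean document; each statement's English description precedes it below -/
import Mathlib

section
/- Let u and v be nonnegative convex functions defined on the interval [a,b] with a < b, and assume u·v is integrable on [a,b]. Then (1/(b-a)) · ∫_a^b u(x)v(x) dx ≤ (1/2) · √(u(a)² + u(b)²) · √(v(a)² + v(b)²). -/
/-!
A convex function on `[a, b]` lies below its chord, the affine interpolation of its endpoint
values, so for nonnegative `u, v` the product `u * v` lies below the product of the two chords,
whose mean over `[a, b]` is `(u a * v a + u b * v b) / 3 + (u a * v b + u b * v a) / 6`.
Both brackets are at most `√(u a ^ 2 + u b ^ 2) * √(v a ^ 2 + v b ^ 2)` by Cauchy–Schwarz,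
and `1 / 3 + 1 / 6 = 1 / 2`.
-/

open Set Real

theorem mul_add_mul_le_sqrt_mul_sqrt (a b c d : ℝ) :
    a * c + b * d ≤ √(a ^ 2 + b ^ 2) * √(c ^ 2 + d ^ 2) := by
  rw [← sqrt_mul (by positivity)]
  exact le_sqrt_of_sq_le (by nlinarith [sq_nonneg (a * d - b * c)])

section Chord

variable {𝕜 : Type*} [Field 𝕜] [LinearOrder 𝕜] [IsStrictOrderedRing 𝕜] {f g : 𝕜 → 𝕜} {a b x : 𝕜}

theorem ConvexOn.mul_le_chord (hf : ConvexOn 𝕜 (Icc a b) f) (hx : x ∈ Icc a b) :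
    (b - a) * f x ≤ (b - x) * f a + (x - a) * f b := by
  obtain ⟨hax, hxb⟩ := hx
  rcases hax.eq_or_lt with rfl | hax
  · simp
  rcases hxb.eq_or_lt with rfl | hxb
  · simp
  exact hf.secant_mono_aux1 (left_mem_Icc.2 (hax.le.trans hxb.le))
    (right_mem_Icc.2 (hax.le.trans hxb.le)) hax hxb

theorem ConvexOn.mul_mul_le_chord_mul_chord (hf : ConvexOn 𝕜 (Icc a b) f)
    (hg : ConvexOn 𝕜 (Icc a b) g) (hx : x ∈ Icc a b) (hfx : 0 ≤ f x) (hgx : 0 ≤ g x) :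
    (b - a) ^ 2 * (f x * g x) ≤
      ((b - x) * f a + (x - a) * f b) * ((b - x) * g a + (x - a) * g b) := by
  have hab : 0 ≤ b - a := sub_nonneg.2 (hx.1.trans hx.2)
  calc (b - a) ^ 2 * (f x * g x) = ((b - a) * f x) * ((b - a) * g x) := by ring
    _ ≤ _ := mul_le_mul (hf.mul_le_chord hx) (hg.mul_le_chord hx) (by positivity)
      ((mul_nonneg hab hfx).trans (hf.mul_le_chord hx))

end Chord

theorem integral_chord_mul_chord (a b p q r s : ℝ) :
    ∫ x in a..b, ((b - x) * p + (x - a) * q) * ((b - x) * r + (x - a) * s) =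
      (b - a) ^ 3 * ((p * r + q * s) / 3 + (p * s + q * r) / 6) := by
  have hderiv (x : ℝ) : HasDerivAt
      (fun x => q * s * (x - a) ^ 3 / 3 - p * r * (b - x) ^ 3 / 3
        + (p * s + q * r) * ((b - a) * (x - a) ^ 2 / 2 - (x - a) ^ 3 / 3))
      (((b - x) * p + (x - a) * q) * ((b - x) * r + (x - a) * s)) x := by
    have hq : HasDerivAt (fun x => x - a) 1 x := (hasDerivAt_id x).sub_const a
    have hp : HasDerivAt (fun x => b - x) (-1) x := (hasDerivAt_id x).const_sub b
    have hcubes := (((hq.pow 3).const_mul (q * s)).div_const 3).sub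
      (((hp.pow 3).const_mul (p * r)).div_const 3)
    have hmixed := ((((hq.pow 2).const_mul (b - a)).div_const 2).sub
      ((hq.pow 3).div_const 3)).const_mul (p * s + q * r)
    refine (hcubes.add hmixed).congr_deriv ?_
    norm_num
    ring
  rw [intervalIntegral.integral_eq_sub_of_hasDerivAt (fun x _ => hderiv x)
    (by apply Continuous.intervalIntegrable; fun_prop)]
  ring

/-- Main Theorem (inequality (4)): for nonnegative convex functions `u, v` on `[a,b]`
with `u * v` integrable, the mean value of `u * v` is bounded by
`(1/2) * √(u a ^ 2 + u b ^ 2) * √(v a ^ 2 + v b ^ 2)`. -/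
theorem hadamard_like_product_bound (a b : ℝ) (hab : a < b) (u v : ℝ → ℝ)
    (hu0 : ∀ x ∈ Set.Icc a b, 0 ≤ u x) (hv0 : ∀ x ∈ Set.Icc a b, 0 ≤ v x)
    (hu : ConvexOn ℝ (Set.Icc a b) u) (hv : ConvexOn ℝ (Set.Icc a b) v)
    (hint : IntervalIntegrable (fun x => u x * v x) MeasureTheory.volume a b) :
    (1 / (b - a)) * ∫ x in a..b, u x * v x ≤
      (1 / 2) * Real.sqrt (u a ^ 2 + u b ^ 2) * Real.sqrt (v a ^ 2 + v b ^ 2) := by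
  have hba : 0 < b - a := sub_pos.2 hab
  have hchord : (b - a) ^ 2 * ∫ x in a..b, u x * v x ≤
      (b - a) ^ 2 * ((b - a) * ((u a * v a + u b * v b) / 3 + (u a * v b + u b * v a) / 6)) := by
    rw [← mul_assoc, ← pow_succ, ← integral_chord_mul_chord, ← intervalIntegral.integral_const_mul]
    exact intervalIntegral.integral_mono_on hab.le (hint.const_mul _)
      (by apply Continuous.intervalIntegrable; fun_prop)
      fun x hx => hu.mul_mul_le_chord_mul_chord hv hx (hu0 x hx) (hv0 x hx)
  have hcs := mul_add_mul_le_sqrt_mul_sqrt (u a) (u b) (v a) (v b)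
  have hcs' := mul_add_mul_le_sqrt_mul_sqrt (u a) (u b) (v b) (v a)
  rw [add_comm (v b ^ 2)] at hcs'
  rw [one_div, inv_mul_le_iff₀ hba]
  calc ∫ x in a..b, u x * v x
      ≤ (b - a) * ((u a * v a + u b * v b) / 3 + (u a * v b + u b * v a) / 6) :=
        le_of_mul_le_mul_left hchord (by positivity)
    _ ≤ (b - a) * (1 / 2 * √(u a ^ 2 + u b ^ 2) * √(v a ^ 2 + v b ^ 2)) := by
        gcongr
        linarith
end

section
/- Let u and v be nonnegative convex functions on [a,b] with a < b such that u² and v² are integrable on [a,b]. Then (1/(b-a)²) · (∫_a^b u²(x) dx) · (∫_a^b v²(x) dx) ≤ ((u(a)² + u(b)²)/2) · ((v(a)² + v(b)²)/2). -/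
/-!
The square of a nonnegative convex function is convex, and a convex function on `[a, b]` lies
below its secant there, so its mean over `[a, b]` is at most the mean of its endpoint values
(the right Hermite–Hadamard inequality). Applied to `u²` and `v²`, this bounds both means, and
the two nonnegative bounds multiply.
-/

open Set intervalIntegral

theorem integral_secant_line {a b : ℝ} (hab : a < b) (p q : ℝ) :
    ∫ x in a..b, ((b - x) * p + (x - a) * q) / (b - a) = (b - a) * ((p + q) / 2) := by
  rw [integral_div, integral_add, integral_mul_const, integral_mul_const, integral_sub,
    integral_sub, integral_id] <;> try exact Continuous.intervalIntegrable (by fun_prop) _ _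
  simp only [integral_const, smul_eq_mul]
  field_simp [(sub_pos.2 hab).ne']
  ring

theorem ConvexOn.le_secant_of_mem_Ioo {f : ℝ → ℝ} {a b x : ℝ} (hf : ConvexOn ℝ (Icc a b) f)
    (hx : x ∈ Ioo a b) :
    f x ≤ ((b - x) * f a + (x - a) * f b) / (b - a) := by
  have hab : a < b := hx.1.trans hx.2
  rw [le_div_iff₀ (sub_pos.2 hab), mul_comm]
  exact hf.secant_mono_aux1 (left_mem_Icc.2 hab.le) (right_mem_Icc.2 hab.le) hx.1 hx.2

theorem ConvexOn.hermite_hadamard_right {f : ℝ → ℝ} {a b : ℝ} (hab : a < b)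
    (hf : ConvexOn ℝ (Icc a b) f) (hfi : IntervalIntegrable f MeasureTheory.volume a b) :
    (b - a)⁻¹ * ∫ x in a..b, f x ≤ (f a + f b) / 2 := by
  rw [inv_mul_le_iff₀ (sub_pos.2 hab), ← integral_secant_line hab]
  exact integral_mono_on_of_le_Ioo hab.le hfi
    (Continuous.intervalIntegrable (by fun_prop) _ _) fun _ hx => hf.le_secant_of_mem_Ioo hx

/-- Inequality (11): the product of the Hadamard right-hand bounds for `u²` and `v²`. -/
theorem product_of_hadamard_bounds (a b : ℝ) (hab : a < b) (u v : ℝ → ℝ)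
    (hu0 : ∀ x ∈ Set.Icc a b, 0 ≤ u x) (hv0 : ∀ x ∈ Set.Icc a b, 0 ≤ v x)
    (hu : ConvexOn ℝ (Set.Icc a b) u) (hv : ConvexOn ℝ (Set.Icc a b) v)
    (hu2int : IntervalIntegrable (fun x => u x ^ 2) MeasureTheory.volume a b)
    (hv2int : IntervalIntegrable (fun x => v x ^ 2) MeasureTheory.volume a b) :
    (1 / (b - a) ^ 2) * (∫ x in a..b, u x ^ 2) * (∫ x in a..b, v x ^ 2) ≤
      ((u a ^ 2 + u b ^ 2) / 2) * ((v a ^ 2 + v b ^ 2) / 2) := by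
  have hu2 : (b - a)⁻¹ * ∫ x in a..b, u x ^ 2 ≤ (u a ^ 2 + u b ^ 2) / 2 :=
    (hu.pow (fun x hx => hu0 x hx) 2).hermite_hadamard_right hab hu2int
  have hv2 : (b - a)⁻¹ * ∫ x in a..b, v x ^ 2 ≤ (v a ^ 2 + v b ^ 2) / 2 :=
    (hv.pow (fun x hx => hv0 x hx) 2).hermite_hadamard_right hab hv2int
  have hv2_nonneg : 0 ≤ (b - a)⁻¹ * ∫ x in a..b, v x ^ 2 :=
    mul_nonneg (inv_nonneg.2 (sub_pos.2 hab).le) (integral_nonneg hab.le fun _ _ => sq_nonneg _)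
  calc (1 / (b - a) ^ 2) * (∫ x in a..b, u x ^ 2) * (∫ x in a..b, v x ^ 2)
      = ((b - a)⁻¹ * ∫ x in a..b, u x ^ 2) * ((b - a)⁻¹ * ∫ x in a..b, v x ^ 2) := by
        rw [one_div, ← inv_pow]; ring
    _ ≤ ((u a ^ 2 + u b ^ 2) / 2) * ((v a ^ 2 + v b ^ 2) / 2) :=
        mul_le_mul hu2 hv2 hv2_nonneg (by positivity)
end

section
/- One has ∫_π^{2π} (sin x + 8)/x dx ≤ 2√10. -/
open Real Set

/-! On `[π, 2π]` the sine is nonpositive, so the integrand is at most `8 / x` and the integral at most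
`8 log 2 < 6 ≤ 2√10`. -/

theorem Real.sin_nonpos_of_pi_le_of_le_two_pi {x : ℝ} (hx : π ≤ x) (hx' : x ≤ 2 * π) :
    sin x ≤ 0 := by
  rw [← sin_sub_two_pi]
  exact sin_nonpos_of_nonpos_of_neg_pi_le (by linarith) (by linarith)

theorem integral_div_le_mul_log_div_of_le {f : ℝ → ℝ} {a b c : ℝ} (ha : 0 < a) (hab : a ≤ b)
    (hf : ContinuousOn f (Icc a b)) (hfc : ∀ x ∈ Icc a b, f x ≤ c) :
    ∫ x in a..b, f x / x ≤ c * log (b / a) := by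
  have hpos : ∀ x ∈ uIcc a b, 0 < x := fun x hx => by
    rw [uIcc_of_le hab] at hx; exact ha.trans_le hx.1
  have hinv : ContinuousOn (fun x : ℝ => x⁻¹) (uIcc a b) :=
    continuousOn_inv₀.mono fun x hx => (hpos x hx).ne'
  calc ∫ x in a..b, f x / x
      ≤ ∫ x in a..b, c * x⁻¹ := by
        refine intervalIntegral.integral_mono_on hab ?_ ?_ fun x hx => ?_
        · exact ((uIcc_of_le hab ▸ hf).mul hinv).intervalIntegrable
        · exact (continuousOn_const.mul hinv).intervalIntegrable
        · exact div_le_div_of_nonneg_right (hfc x hx) (ha.trans_le hx.1).le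
    _ = c * log (b / a) := by
        rw [intervalIntegral.integral_const_mul, integral_inv_of_pos ha (ha.trans_le hab)]

theorem eight_mul_log_two_le_two_mul_sqrt_ten : 8 * log 2 ≤ 2 * √10 := by
  have h3 : (3 : ℝ) ≤ √10 := le_sqrt_of_sq_le (by norm_num)
  linarith [log_two_lt_d9]

/-- Example 3: `∫_π^{2π} (sin x + 8)/x dx ≤ 2√10`. -/
theorem integral_sin_add_eight_div_x_le :
    (∫ x in π..(2 * π), (Real.sin x + 8) / x) ≤ 2 * Real.sqrt 10 := by
  calc (∫ x in π..(2 * π), (Real.sin x + 8) / x)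
      ≤ 8 * log (2 * π / π) :=
        integral_div_le_mul_log_div_of_le pi_pos (by linarith [pi_pos])
          (continuous_sin.add continuous_const).continuousOn
          fun x hx => by linarith [sin_nonpos_of_pi_le_of_le_two_pi hx.1 hx.2]
    _ = 8 * log 2 := by rw [mul_div_cancel_right₀ _ pi_ne_zero]
    _ ≤ 2 * √10 := eight_mul_log_two_le_two_mul_sqrt_ten
end
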